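/- arXiv:1303.4313 — 4 statements merged into one kernel-verified Lean document; each statement's English description precedes it below -/
import Mathlib

section
/- Let d, a, c be nonnegative integers with c ≤ min(a, d). The number of a-tuples (v₁, …, v_a) of vectors of (𝔽_q)^d whose linear span has dimension c equals q^{dc + ca − c²} · (q⁻¹)_a (q⁻¹)_d / ( (q⁻¹)_c (q⁻¹)_{a−c} (q⁻¹)_{d−c} ). Equivalently, if v₁, …, v_a are independent uniformly distributed random vectors of (𝔽_q)^d, the probability that the rank of (v₁, …, v_a) equals c is q^{(d−c)(c−a)} (q⁻¹)_a (q⁻¹)_d / ( (q⁻¹)_c (q⁻¹)_{a−c} (q⁻¹)_{d−c} ). -/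
/-! Write `N(a, d, c)` for the number of `a`-tuples in `F^d` of rank `c`. Grouping them by their
span `W`, each fibre is in bijection with the `a`-tuples spanning `F^c`, so
`N(a, d, c) = G(d, c) · N(a, c, c)` with `G(d, c)` the number of `c`-dimensional subspaces. The
case `a = c` eliminates `G`: `N(a, d, c) · N(c, c, c) = N(c, d, c) · N(a, c, c)`. Transposing the
`c × a` matrix, `N(a, c, c) = N(c, a, c)`, and `N(c, n, c)` counts linearly independent
`c`-tuples in `F^n`, namely `∏_{i<c} (q^n - q^i) = q^{nc} (q⁻¹)_n / (q⁻¹)_{n-c}`. -/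

/-- The Pochhammer symbol `(q⁻¹)_m = ∏_{i=1}^m (1 - q^{-i})`. -/
noncomputable def qPoch (q : ℚ) (m : ℕ) : ℚ :=
  ∏ i ∈ Finset.range m, (1 - q⁻¹ ^ (i + 1))

open Module Set Submodule

section SpanningTuples

variable {R M N ι : Type*} [Semiring R] [AddCommMonoid M] [AddCommMonoid N] [Module R M]
  [Module R N]

theorem Submodule.span_range_comp (f : M →ₗ[R] N) (v : ι → M) :
    span R (range (f ∘ v)) = (span R (range v)).map f := by
  rw [map_span, range_comp]

def Submodule.spanEqEquivSpanEqTop (W : Submodule R M) :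
    {v : ι → M // span R (range v) = W} ≃ {w : ι → W // span R (range w) = ⊤} where
  toFun v := ⟨fun i => ⟨v.1 i, v.2.le (subset_span (mem_range_self i))⟩, by
    apply map_injective_of_injective W.injective_subtype
    rw [← span_range_comp, map_subtype_top]
    exact v.2⟩
  invFun w := ⟨W.subtype ∘ w.1, by rw [span_range_comp, w.2, map_subtype_top]⟩
  left_inv _ := rfl
  right_inv _ := rfl

def LinearEquiv.spanEqTopEquiv (e : M ≃ₗ[R] N) :
    {v : ι → M // span R (range v) = ⊤} ≃ {u : ι → N // span R (range u) = ⊤} :=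
  (Equiv.arrowCongr (Equiv.refl ι) e.toEquiv).subtypeEquiv fun v => by
    rw [← Submodule.map_eq_top_iff (e := e), ← span_range_comp]
    rfl

end SpanningTuples

section Rank

variable {F V ι : Type*} [Field F] [AddCommGroup V] [Module F V]

theorem finrank_span_range_transpose {m n : Type*} [Fintype m] [Fintype n] (v : m → n → F) :
    finrank F (span F (range fun j i => v i j)) = finrank F (span F (range v)) := by
  have h := Matrix.rank_transpose (Matrix.of v)
  rwa [Matrix.rank_eq_finrank_span_row, Matrix.rank_eq_finrank_span_row] at h

noncomputable def Submodule.spanEqEquivFinrankSpanEq [Module.Finite F V] {c : ℕ}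
    (W : Submodule F V) (hW : finrank F W = c) :
    {v : ι → V // span F (range v) = W} ≃
      {u : ι → Fin c → F // finrank F (span F (range u)) = c} :=
  W.spanEqEquivSpanEqTop.trans <|
    (LinearEquiv.ofFinrankEq W (Fin c → F) (by simp [hW])).spanEqTopEquiv.trans <|
      Equiv.subtypeEquivRight fun _ => by rw [eq_top_iff_finrank_eq, finrank_fin_fun]

theorem card_finrank_span_eq_card_submodule_mul [Module.Finite F V] (c : ℕ) :
    Nat.card {v : ι → V // finrank F (span F (range v)) = c} =
      Nat.card {W : Submodule F V // finrank F W = c} *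
        Nat.card {u : ι → Fin c → F // finrank F (span F (range u)) = c} := by
  rw [← Nat.card_prod]
  exact Nat.card_congr <|
    (Equiv.sigmaSubtypeFiberEquivSubtype (fun v : ι → V => span F (range v))
      (q := fun W => finrank F W = c) fun _ => Iff.rfl).symm.trans <|
      (Equiv.sigmaCongrRight fun W => W.1.spanEqEquivFinrankSpanEq W.2).trans
        (Equiv.sigmaEquivProd _ _)

theorem card_finrank_span_mul_card_square (a d c : ℕ) :
    Nat.card {v : Fin a → Fin d → F // finrank F (span F (range v)) = c} *
        Nat.card {v : Fin c → Fin c → F // finrank F (span F (range v)) = c} =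
      Nat.card {v : Fin c → Fin d → F // finrank F (span F (range v)) = c} *
        Nat.card {v : Fin c → Fin a → F // finrank F (span F (range v)) = c} := by
  have htranspose : Nat.card {v : Fin a → Fin c → F // finrank F (span F (range v)) = c} =
      Nat.card {v : Fin c → Fin a → F // finrank F (span F (range v)) = c} :=
    Nat.card_congr <| (Equiv.piComm fun _ _ => F).subtypeEquiv fun v => by
      rw [← finrank_span_range_transpose v]
      rfl
  rw [card_finrank_span_eq_card_submodule_mul (V := Fin d → F) (ι := Fin a),
    card_finrank_span_eq_card_submodule_mul (V := Fin d → F) (ι := Fin c), htranspose]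
  ring

theorem card_finrank_span_eq_self [Fintype F] [Finite V] {k : ℕ} (hk : k ≤ finrank F V) :
    (Nat.card {v : Fin k → V // finrank F (span F (range v)) = k} : ℚ) =
      ∏ i ∈ Finset.range k, ((Fintype.card F : ℚ) ^ finrank F V - Fintype.card F ^ i) := by
  have hindep : {v : Fin k → V // finrank F (span F (range v)) = k} ≃
      {v : Fin k → V // LinearIndependent F v} :=
    Equiv.subtypeEquivRight fun v => by
      rw [linearIndependent_iff_card_eq_finrank_span, Set.finrank, Fintype.card_fin, eq_comm]
  rw [Nat.card_congr hindep, card_linearIndependent hk, ← Finset.prod_range (fun i => _ - _),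
    Nat.cast_prod]
  refine Finset.prod_congr rfl fun i hi => ?_
  rw [Nat.cast_sub (Nat.pow_le_pow_right Fintype.card_pos (by simp at hi; omega))]
  push_cast
  rfl

end Rank

theorem qPoch_zero (q : ℚ) : qPoch q 0 = 1 :=
  Finset.prod_range_zero _

theorem qPoch_succ (q : ℚ) (m : ℕ) : qPoch q (m + 1) = qPoch q m * (1 - q⁻¹ ^ (m + 1)) :=
  Finset.prod_range_succ _ _

theorem qPoch_pos {q : ℚ} (hq : 1 < q) (m : ℕ) : 0 < qPoch q m :=
  Finset.prod_pos fun i _ =>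
    sub_pos.2 <| pow_lt_one₀ (by positivity) (inv_lt_one_of_one_lt₀ hq) i.succ_ne_zero

theorem prod_pow_sub_pow_mul_qPoch {q : ℚ} (hq : q ≠ 0) {k n : ℕ} (hk : k ≤ n) :
    (∏ i ∈ Finset.range k, (q ^ n - q ^ i)) * qPoch q (n - k) = q ^ (n * k) * qPoch q n := by
  induction k with
  | zero => simp
  | succ k ih =>
    obtain ⟨m, rfl⟩ := Nat.exists_eq_add_of_le hk
    have hfactor : q ^ (k + 1 + m) - q ^ k = q ^ (k + 1 + m) * (1 - q⁻¹ ^ (m + 1)) := by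
      rw [mul_sub, mul_one, show k + 1 + m = k + (m + 1) by omega, pow_add, mul_assoc, ← mul_pow,
        mul_inv_cancel₀ hq, one_pow, mul_one]
    have ih' := ih (by omega)
    rw [show k + 1 + m - k = m + 1 by omega, qPoch_succ] at ih'
    rw [Finset.prod_range_succ, hfactor, show k + 1 + m - (k + 1) = m by omega]
    linear_combination q ^ (k + 1 + m) * ih'

theorem card_finrank_span_eq_qPoch {F : Type*} [Field F] [Fintype F] {a d c : ℕ} (hca : c ≤ a)
    (hcd : c ≤ d) :
    (Nat.card {v : Fin a → Fin d → F // finrank F (span F (range v)) = c} : ℚ) =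
      (Fintype.card F : ℚ) ^ (d * c + c * a - c ^ 2) *
        qPoch (Fintype.card F) a * qPoch (Fintype.card F) d /
        (qPoch (Fintype.card F) c * qPoch (Fintype.card F) (a - c) *
          qPoch (Fintype.card F) (d - c)) := by
  set q : ℚ := (Fintype.card F : ℚ)
  have hq : 1 < q := Nat.one_lt_cast.2 Fintype.one_lt_card
  have hq0 : q ≠ 0 := by positivity
  have hprod {n : ℕ} (hn : c ≤ n) :
      ∏ i ∈ Finset.range c, (q ^ n - q ^ i) = q ^ (n * c) * qPoch q n / qPoch q (n - c) :=
    eq_div_of_mul_eq (qPoch_pos hq _).ne' (prod_pow_sub_pow_mul_qPoch hq0 hn)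
  have key : ((_ * _ : ℕ) : ℚ) = ((_ * _ : ℕ) : ℚ) :=
    congrArg Nat.cast (card_finrank_span_mul_card_square (F := F) a d c)
  push_cast at key
  rw [card_finrank_span_eq_self (by simp), card_finrank_span_eq_self (by simp [hcd]),
    card_finrank_span_eq_self (by simp [hca])] at key
  simp only [finrank_fin_fun] at key
  rw [hprod le_rfl, hprod hca, hprod hcd, Nat.sub_self, qPoch_zero] at key
  have hPc := qPoch_pos hq c
  have hPa := qPoch_pos hq (a - c)
  have hPd := qPoch_pos hq (d - c)
  rw [pow_sub₀ _ hq0 (by nlinarith)]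
  field_simp at key ⊢
  linear_combination key

/-- The number of `a`-tuples of vectors of `F^d` whose span has dimension `c`, and the
corresponding probability for independent uniform random vectors. -/
theorem statement5 {F : Type*} [Field F] [Fintype F] (d a c : ℕ) (hc : c ≤ min a d) :
    (Nat.card {v : Fin a → (Fin d → F) //
        Module.finrank F ↥(Submodule.span F (Set.range v)) = c} : ℚ) =
      (Fintype.card F : ℚ) ^ (d * c + c * a - c ^ 2) *
        qPoch (Fintype.card F) a * qPoch (Fintype.card F) d /
        (qPoch (Fintype.card F) c * qPoch (Fintype.card F) (a - c) *
          qPoch (Fintype.card F) (d - c)) ∧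
    (Nat.card {v : Fin a → (Fin d → F) //
        Module.finrank F ↥(Submodule.span F (Set.range v)) = c} : ℚ) /
        (Fintype.card F : ℚ) ^ (d * a) =
      (Fintype.card F : ℚ) ^ (((d : ℤ) - c) * ((c : ℤ) - a)) *
        qPoch (Fintype.card F) a * qPoch (Fintype.card F) d /
        (qPoch (Fintype.card F) c * qPoch (Fintype.card F) (a - c) *
          qPoch (Fintype.card F) (d - c)) := by
  obtain ⟨hca, hcd⟩ := le_min_iff.1 hc
  have hcount := card_finrank_span_eq_qPoch (F := F) hca hcd
  refine ⟨hcount, ?_⟩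
  have hq0 : (Fintype.card F : ℚ) ≠ 0 := by simp
  have hexp : (Fintype.card F : ℚ) ^ (d * c + c * a - c ^ 2) =
      (Fintype.card F : ℚ) ^ (((d : ℤ) - c) * ((c : ℤ) - a)) *
        (Fintype.card F : ℚ) ^ (d * a) := by
    rw [← zpow_natCast, ← zpow_natCast, ← zpow_add₀ hq0]
    congr 1
    push_cast [Nat.cast_sub (show c ^ 2 ≤ d * c + c * a by nlinarith)]
    ring
  rw [hcount, hexp]
  field_simp
end

section
/- Let 𝒵(n, 𝔽_q) be the subspace of 𝒜(n, 𝔽_q) consisting of elements invariant under the two-sided action of GL(n, 𝔽_q). Then 𝒵(n, 𝔽_q) is closed under the product * of 𝒜(n, 𝔽_q), and it is commutative: x * y = y * x for all x, y ∈ 𝒵(n, 𝔽_q). -/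
/-- A partial isomorphism of `F^n`: a pair of linear isomorphisms
between two subspaces of the same dimension. -/
structure PartialIso (F : Type*) [Field F] (n : ℕ) where
  V : Submodule F (Fin n → F)
  W : Submodule F (Fin n → F)
  g₁ : V ≃ₗ[F] W
  g₂ : W ≃ₗ[F] V

variable {F : Type*} [Field F] {n : ℕ}

/-- `Q` is an extension of the partial isomorphism `P`. -/
def PartialIso.Extends (Q P : PartialIso F n) : Prop :=
  ∃ (hV : P.V ≤ Q.V) (hW : P.W ≤ Q.W),
    (∀ v : P.V, (Q.g₁ ⟨v.1, hV v.2⟩ : Fin n → F) = (P.g₁ v : Fin n → F)) ∧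
    (∀ w : P.W, (Q.g₂ ⟨w.1, hW w.2⟩ : Fin n → F) = (P.g₂ w : Fin n → F))

/-- `Q` is a trivial extension of `P`: the quotient isomorphisms
`Q.V/P.V → Q.W/P.W` and `Q.W/P.W → Q.V/P.V` induced by `Q.g₁` and `Q.g₂` are
mutually inverse; this is written out as the two coset conditions below. -/
def PartialIso.IsTrivialExt (P Q : PartialIso F n) : Prop :=
  Q.Extends P ∧
  (∀ v : Q.V, ((Q.g₂ (Q.g₁ v) : Fin n → F) - (v : Fin n → F)) ∈ P.V) ∧
  (∀ w : Q.W, ((Q.g₁ (Q.g₂ w) : Fin n → F) - (w : Fin n → F)) ∈ P.W)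

/-- The dimension of the space of fixed vectors of the composite automorphism `g₂ ∘ g₁` of `V`. -/
noncomputable def PartialIso.fixDim (P : PartialIso F n) : ℕ :=
  Module.finrank F
    (LinearMap.ker ((P.g₁.trans P.g₂).toLinearMap - (LinearMap.id : P.V →ₗ[F] P.V)))

open scoped Classical

/-- The complex vector space with basis the set of partial isomorphisms of `F^n`. -/
abbrev PIAlg (F : Type*) [Field F] (n : ℕ) := PartialIso F n →₀ ℂ

/-- `R_W^{W⁺}(P)`: the uniform average of the trivial extensions of `P` whose right
subspace equals `Wp` (left subspace arbitrary). -/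
noncomputable def avgR (P : PartialIso F n) (Wp : Submodule F (Fin n → F)) : PIAlg F n :=
  (Nat.card {Q : PartialIso F n // P.IsTrivialExt Q ∧ Q.W = Wp} : ℂ)⁻¹ •
    ∑ᶠ (Q : PartialIso F n) (_ : P.IsTrivialExt Q ∧ Q.W = Wp), Finsupp.single Q (1 : ℂ)

/-- `L_V^{V⁺}(P)`: the uniform average of the trivial extensions of `P` whose left
subspace equals `Vp` (right subspace arbitrary). -/
noncomputable def avgL (P : PartialIso F n) (Vp : Submodule F (Fin n → F)) : PIAlg F n :=
  (Nat.card {Q : PartialIso F n // P.IsTrivialExt Q ∧ Q.V = Vp} : ℂ)⁻¹ •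
    ∑ᶠ (Q : PartialIso F n) (_ : P.IsTrivialExt Q ∧ Q.V = Vp), Finsupp.single Q (1 : ℂ)

/-- Composition of two partial isomorphisms whose middle subspaces agree:
`(U,V,g₁,g₂)` and `(V,X,h₁,h₂)` compose to `(U,X,h₁∘g₁,g₂∘h₂)`. -/
def PartialIso.compo (A B : PartialIso F n) (h : A.W = B.V) : PartialIso F n where
  V := A.V
  W := B.W
  g₁ := (A.g₁.trans (LinearEquiv.ofEq _ _ h)).trans B.g₁
  g₂ := (B.g₂.trans (LinearEquiv.ofEq _ _ h.symm)).trans A.g₂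

/-- The pairing of two partial isomorphisms: their composition when the middle
subspaces agree, `0` otherwise. -/
noncomputable def pairTerm (A B : PartialIso F n) : PIAlg F n :=
  if h : A.W = B.V then Finsupp.single (A.compo B h) (1 : ℂ) else 0

/-- The product of two basis elements of `𝒜(n,F)`: the bilinear pairing of
`R_V^{V+W}(P)` with `L_W^{V+W}(Q)`. -/
noncomputable def mulBasis (P Q : PartialIso F n) : PIAlg F n :=
  (avgR P (P.W ⊔ Q.V)).sum fun A cA =>
    (avgL Q (P.W ⊔ Q.V)).sum fun B cB => (cA * cB) • pairTerm A B

/-- The product of the algebra `𝒜(n,F)` of partial isomorphisms. -/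
noncomputable def piMul (x y : PIAlg F n) : PIAlg F n :=
  x.sum fun P cP => y.sum fun Q cQ => (cP * cQ) • mulBasis P Q

/-- The empty partial isomorphism `({0},{0},id,id)`. -/
def PartialIso.unit (F : Type*) [Field F] (n : ℕ) : PartialIso F n :=
  ⟨⊥, ⊥, LinearEquiv.refl F _, LinearEquiv.refl F _⟩

lemma map_comap_equiv (e : (Fin n → F) ≃ₗ[F] (Fin n → F)) (p : Submodule F (Fin n → F)) :
    (p.comap (e : (Fin n → F) →ₗ[F] (Fin n → F))).map (e : (Fin n → F) →ₗ[F] (Fin n → F)) = p :=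
  Submodule.map_comap_eq_of_surjective e.surjective p

/-- The two-sided action of `GL(n, F)` (realized as linear automorphisms of `F^n`) on partial
isomorphisms: `k · (V,W,g₁,g₂) · l = (k⁻¹(V), l⁻¹(W), l⁻¹∘g₁∘k, k⁻¹∘g₂∘l)`. -/
noncomputable def PartialIso.act (k l : (Fin n → F) ≃ₗ[F] (Fin n → F)) (P : PartialIso F n) :
    PartialIso F n where
  V := P.V.comap (k : (Fin n → F) →ₗ[F] (Fin n → F))
  W := P.W.comap (l : (Fin n → F) →ₗ[F] (Fin n → F))
  g₁ := (((k.submoduleMap (P.V.comap (k : (Fin n → F) →ₗ[F] (Fin n → F)))).trans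
          (LinearEquiv.ofEq _ _ (map_comap_equiv k P.V))).trans P.g₁).trans
        (((l.submoduleMap (P.W.comap (l : (Fin n → F) →ₗ[F] (Fin n → F)))).trans
          (LinearEquiv.ofEq _ _ (map_comap_equiv l P.W))).symm)
  g₂ := (((l.submoduleMap (P.W.comap (l : (Fin n → F) →ₗ[F] (Fin n → F)))).trans
          (LinearEquiv.ofEq _ _ (map_comap_equiv l P.W))).trans P.g₂).trans
        (((k.submoduleMap (P.V.comap (k : (Fin n → F) →ₗ[F] (Fin n → F)))).trans
          (LinearEquiv.ofEq _ _ (map_comap_equiv k P.V))).symm)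

/-- The two-sided action of `GL(n,F)` on `𝒜(n,F)`, extended linearly. -/
noncomputable def actA (k l : (Fin n → F) ≃ₗ[F] (Fin n → F)) (x : PIAlg F n) : PIAlg F n :=
  Finsupp.mapDomain (PartialIso.act k l) x

/-- The set `𝒵(n,F)` of elements of `𝒜(n,F)` invariant under the two-sided
`GL(n,F)`-action. -/
def Zset (F : Type*) [Field F] (n : ℕ) : Set (PIAlg F n) :=
  {x | ∀ k l : (Fin n → F) ≃ₗ[F] (Fin n → F), actA k l x = x}

/-!
The two-sided action of `(k, l)` is compatible with the product in the form
`(k, l) · (x * y) = ((k, m) · x) * ((m, l) · y)` for every `m`: trivial extensions, their uniform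
averages and the composition of partial isomorphisms are all transported by the action. With
`m = 1` this shows that `𝒵(n, F)` is closed under the product.

The swap `(V, W, g₁, g₂) ↦ (W, V, g₂, g₁)` reverses products. Every partial isomorphism lies in the
orbit of its own swap (act by `k` extending `g₂` and `l` extending `g₁`), so biinvariant elements
are fixed by the swap, and `x * y = swap (x * y) = swap y * swap x = y * x` on `𝒵(n, F)`.
-/

section Submodule

variable {R M M₂ : Type*} [Semiring R] [AddCommMonoid M] [AddCommMonoid M₂] [Module R M]
  [Module R M₂]

lemma Submodule.comap_equiv_inj (e : M ≃ₗ[R] M₂) {p q : Submodule R M₂} :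
    p.comap (e : M →ₗ[R] M₂) = q.comap (e : M →ₗ[R] M₂) ↔ p = q :=
  (Submodule.comap_injective_of_surjective e.surjective).eq_iff

lemma Submodule.comap_eq_of_restrict_eq {V W : Submodule R M} (e : W ≃ₗ[R] V)
    {k : M ≃ₗ[R] M} (hk : ∀ w : W, (e w : M) = k w) : V.comap (k : M →ₗ[R] M) = W := by
  ext x
  refine ⟨fun hx => ?_, fun hx => ?_⟩
  · have hkx : k (e.symm ⟨k x, hx⟩) = k x := by rw [← hk, LinearEquiv.apply_symm_apply]
    exact k.injective hkx ▸ (e.symm ⟨k x, hx⟩).2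
  · rw [Submodule.mem_comap, LinearEquiv.coe_coe, ← hk ⟨x, hx⟩]
    exact (e _).2

end Submodule

section Finsupp

variable {α α' β β' γ δ R : Type*}

noncomputable def uniformAvg [DivisionSemiring R] (p : α → Prop) : α →₀ R :=
  (Nat.card {a // p a} : R)⁻¹ • ∑ᶠ (a : α) (_ : p a), Finsupp.single a 1

lemma mapDomain_uniformAvg [DivisionSemiring R] (e : α ≃ β) {p : α → Prop} {q : β → Prop}
    (h : ∀ a, q (e a) ↔ p a) :
    Finsupp.mapDomain e (uniformAvg (R := R) p) = uniformAvg q := by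
  have hcard : Nat.card {a // p a} = Nat.card {b // q b} :=
    Nat.card_congr (e.subtypeEquiv fun a => (h a).symm)
  have hsum : Finsupp.mapDomain e (∑ᶠ (a : α) (_ : p a), Finsupp.single a (1 : R)) =
      ∑ᶠ (b : β) (_ : q b), Finsupp.single b 1 := by
    rw [← Finsupp.equivMapDomain_eq_mapDomain, ← Finsupp.domCongr_apply, AddEquiv.map_finsum,
      ← finsum_comp_equiv e]
    simp only [AddEquiv.map_finsum, Finsupp.domCongr_apply, Finsupp.equivMapDomain_single, h]
  rw [uniformAvg, Finsupp.mapDomain_smul, hsum, hcard, uniformAvg]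

variable [CommSemiring R]

noncomputable def pairSum (x : α →₀ R) (y : β →₀ R) (f : α → β → γ →₀ R) : γ →₀ R :=
  x.sum fun a c => y.sum fun b d => (c * d) • f a b

lemma pairSum_comm (x : α →₀ R) (y : β →₀ R) (f : α → β → γ →₀ R) :
    pairSum x y f = pairSum y x fun b a => f a b := by
  simp only [pairSum, Finsupp.sum, mul_comm]
  exact Finset.sum_comm

lemma mapDomain_pairSum {g : γ → δ} {e₁ : α → α'} {e₂ : β → β'} {f : α → β → γ →₀ R}
    {f' : α' → β' → δ →₀ R} (hf : ∀ a b, Finsupp.mapDomain g (f a b) = f' (e₁ a) (e₂ b))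
    (x : α →₀ R) (y : β →₀ R) :
    Finsupp.mapDomain g (pairSum x y f) =
      pairSum (Finsupp.mapDomain e₁ x) (Finsupp.mapDomain e₂ y) f' := by
  have lhs : Finsupp.mapDomain g (pairSum x y f) =
      x.sum fun a c => y.sum fun b d => (c * d) • f' (e₁ a) (e₂ b) := by
    rw [← Finsupp.lmapDomain_apply R R]
    simp only [pairSum, map_finsuppSum, map_smul, Finsupp.lmapDomain_apply, hf]
  rw [lhs, pairSum, Finsupp.sum_mapDomain_index (by simp [Finsupp.sum]) fun a c d => by
    simp only [← Finsupp.sum_add, add_mul, add_smul]]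
  refine Finsupp.sum_congr fun a _ => ?_
  rw [Finsupp.sum_mapDomain_index (by simp) fun b c d => by rw [mul_add, add_smul]]

end Finsupp

namespace PartialIso

lemma ext {P Q : PartialIso F n} (hV : P.V = Q.V) (hW : P.W = Q.W)
    (h₁ : ∀ v : P.V, (P.g₁ v : Fin n → F) = Q.g₁ ⟨v, hV ▸ v.2⟩)
    (h₂ : ∀ w : P.W, (P.g₂ w : Fin n → F) = Q.g₂ ⟨w, hW ▸ w.2⟩) :
    P = Q := by
  obtain ⟨V, W, g₁, g₂⟩ := P
  obtain ⟨V', W', g₁', g₂'⟩ := Q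
  dsimp only at hV hW h₁ h₂
  subst hV hW
  congr 1
  · exact LinearEquiv.ext fun v => Subtype.ext (h₁ v)
  · exact LinearEquiv.ext fun w => Subtype.ext (h₂ w)

variable (k l m : (Fin n → F) ≃ₗ[F] (Fin n → F)) (P : PartialIso F n)

lemma act_V : (P.act k l).V = P.V.comap (k : (Fin n → F) →ₗ[F] (Fin n → F)) := rfl

lemma act_W : (P.act k l).W = P.W.comap (l : (Fin n → F) →ₗ[F] (Fin n → F)) := rfl

lemma act_g₁_apply (v : (P.act k l).V) :
    ((P.act k l).g₁ v : Fin n → F) = l.symm (P.g₁ ⟨k v, v.2⟩) :=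
  rfl

lemma act_g₂_apply (w : (P.act k l).W) :
    ((P.act k l).g₂ w : Fin n → F) = k.symm (P.g₂ ⟨l w, w.2⟩) :=
  rfl

lemma act_act (k' l' : (Fin n → F) ≃ₗ[F] (Fin n → F)) :
    (P.act k l).act k' l' = P.act (k'.trans k) (l'.trans l) :=
  ext rfl rfl (fun v => by rw [act_g₁_apply, act_g₁_apply, act_g₁_apply]; rfl)
    (fun w => by rw [act_g₂_apply, act_g₂_apply, act_g₂_apply]; rfl)

lemma act_refl : P.act (LinearEquiv.refl F _) (LinearEquiv.refl F _) = P :=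
  ext rfl rfl (fun v => by rw [act_g₁_apply]; rfl) (fun w => by rw [act_g₂_apply]; rfl)

lemma act_symm_act : (P.act k l).act k.symm l.symm = P := by
  rw [act_act, LinearEquiv.symm_trans_self, LinearEquiv.symm_trans_self, act_refl]

lemma act_act_symm : (P.act k.symm l.symm).act k l = P := by
  rw [act_act, LinearEquiv.self_trans_symm, LinearEquiv.self_trans_symm, act_refl]

@[simps]
noncomputable def actPerm : Equiv.Perm (PartialIso F n) where
  toFun := act k l
  invFun := act k.symm l.symm
  left_inv := act_symm_act k l
  right_inv := act_act_symm k l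

lemma act_g₂_g₁_apply (v : (P.act k l).V) :
    ((P.act k l).g₂ ((P.act k l).g₁ v) : Fin n → F) = k.symm (P.g₂ (P.g₁ ⟨k v, v.2⟩)) := by
  rw [act_g₂_apply]
  congr 3
  exact Subtype.ext ((congrArg l (act_g₁_apply k l P v)).trans (l.apply_symm_apply _))

lemma act_g₁_g₂_apply (w : (P.act k l).W) :
    ((P.act k l).g₁ ((P.act k l).g₂ w) : Fin n → F) = l.symm (P.g₁ (P.g₂ ⟨l w, w.2⟩)) := by
  rw [act_g₁_apply]
  congr 3
  exact Subtype.ext ((congrArg k (act_g₂_apply k l P w)).trans (k.apply_symm_apply _))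

variable {k l} in
lemma IsTrivialExt.act {Q : PartialIso F n} (h : P.IsTrivialExt Q) :
    (P.act k l).IsTrivialExt (Q.act k l) := by
  obtain ⟨⟨hV, hW, h₁, h₂⟩, hc₁, hc₂⟩ := h
  refine ⟨⟨fun _ hx => hV hx, fun _ hx => hW hx, fun v => ?_, fun w => ?_⟩,
    fun v => ?_, fun w => ?_⟩
  · rw [act_g₁_apply, act_g₁_apply]
    exact congrArg l.symm (h₁ ⟨k v, v.2⟩)
  · rw [act_g₂_apply, act_g₂_apply]
    exact congrArg k.symm (h₂ ⟨l w, w.2⟩)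
  · rw [act_V, Submodule.mem_comap, LinearEquiv.coe_coe, map_sub, act_g₂_g₁_apply,
      LinearEquiv.apply_symm_apply]
    exact hc₁ ⟨k v, v.2⟩
  · rw [act_W, Submodule.mem_comap, LinearEquiv.coe_coe, map_sub, act_g₁_g₂_apply,
      LinearEquiv.apply_symm_apply]
    exact hc₂ ⟨l w, w.2⟩

lemma isTrivialExt_act_iff {Q : PartialIso F n} :
    (P.act k l).IsTrivialExt (Q.act k l) ↔ P.IsTrivialExt Q := by
  refine ⟨fun h => ?_, IsTrivialExt.act P⟩
  simpa only [act_symm_act] using h.act (k := k.symm) (l := l.symm)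

lemma compo_g₁_apply (A B : PartialIso F n) (h : A.W = B.V) (v : (A.compo B h).V) :
    ((A.compo B h).g₁ v : Fin n → F) = B.g₁ ⟨A.g₁ v, h ▸ (A.g₁ v).2⟩ :=
  rfl

lemma compo_g₂_apply (A B : PartialIso F n) (h : A.W = B.V) (w : (A.compo B h).W) :
    ((A.compo B h).g₂ w : Fin n → F) = A.g₂ ⟨B.g₂ w, h.symm ▸ (B.g₂ w).2⟩ :=
  rfl

lemma act_compo (A B : PartialIso F n) (h : A.W = B.V) (h' : (A.act k m).W = (B.act m l).V) :
    (A.compo B h).act k l = (A.act k m).compo (B.act m l) h' := by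
  refine ext rfl rfl (fun v => ?_) (fun w => ?_)
  · rw [act_g₁_apply, compo_g₁_apply, compo_g₁_apply, act_g₁_apply]
    congr 3
    exact Subtype.ext ((congrArg m (act_g₁_apply k m A _)).trans (m.apply_symm_apply _)).symm
  · rw [act_g₂_apply, compo_g₂_apply, compo_g₂_apply, act_g₂_apply]
    congr 3
    exact Subtype.ext ((congrArg m (act_g₂_apply m l B _)).trans (m.apply_symm_apply _)).symm

def swap (P : PartialIso F n) : PartialIso F n := ⟨P.W, P.V, P.g₂, P.g₁⟩

lemma swap_V (P : PartialIso F n) : P.swap.V = P.W := rfl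

lemma swap_W (P : PartialIso F n) : P.swap.W = P.V := rfl

lemma swap_involutive : Function.Involutive (swap (F := F) (n := n)) := fun _ => rfl

lemma IsTrivialExt.swap {P Q : PartialIso F n} (h : P.IsTrivialExt Q) :
    P.swap.IsTrivialExt Q.swap :=
  let ⟨⟨hV, hW, h₁, h₂⟩, hc₁, hc₂⟩ := h
  ⟨⟨hW, hV, h₂, h₁⟩, hc₂, hc₁⟩

lemma isTrivialExt_swap_iff {P Q : PartialIso F n} :
    P.swap.IsTrivialExt Q.swap ↔ P.IsTrivialExt Q :=
  ⟨IsTrivialExt.swap, IsTrivialExt.swap⟩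

lemma swap_compo (A B : PartialIso F n) (h : A.W = B.V) :
    (A.compo B h).swap = B.swap.compo A.swap h.symm :=
  rfl

lemma exists_act_eq_swap (P : PartialIso F n) :
    ∃ k l : (Fin n → F) ≃ₗ[F] (Fin n → F), P.act k l = P.swap := by
  obtain ⟨k, hk⟩ := Submodule.exists_linearEquiv_restrict_eq P.g₂
  obtain ⟨l, hl⟩ := Submodule.exists_linearEquiv_restrict_eq P.g₁
  have hV := Submodule.comap_eq_of_restrict_eq P.g₂ hk
  have hW := Submodule.comap_eq_of_restrict_eq P.g₁ hl
  refine ⟨k, l, ext hV hW (fun v => ?_) (fun w => ?_)⟩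
  · rw [act_g₁_apply, LinearEquiv.symm_apply_eq]
    exact (congrArg (fun u => (P.g₁ u : Fin n → F))
      (Subtype.ext (hk ⟨v, hV ▸ v.2⟩).symm)).trans (hl _)
  · rw [act_g₂_apply, LinearEquiv.symm_apply_eq]
    exact (congrArg (fun u => (P.g₂ u : Fin n → F))
      (Subtype.ext (hl ⟨w, hW ▸ w.2⟩).symm)).trans (hk _)

end PartialIso

open PartialIso

noncomputable def swapA (x : PIAlg F n) : PIAlg F n :=
  Finsupp.mapDomain PartialIso.swap x

section Product

variable (k l m : (Fin n → F) ≃ₗ[F] (Fin n → F))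

lemma avgR_eq_uniformAvg (P : PartialIso F n) (Wp : Submodule F (Fin n → F)) :
    avgR P Wp = uniformAvg fun Q => P.IsTrivialExt Q ∧ Q.W = Wp :=
  rfl

lemma avgL_eq_uniformAvg (P : PartialIso F n) (Vp : Submodule F (Fin n → F)) :
    avgL P Vp = uniformAvg fun Q => P.IsTrivialExt Q ∧ Q.V = Vp :=
  rfl

lemma mulBasis_eq_pairSum (P Q : PartialIso F n) :
    mulBasis P Q = pairSum (avgR P (P.W ⊔ Q.V)) (avgL Q (P.W ⊔ Q.V)) pairTerm :=
  rfl

lemma piMul_eq_pairSum (x y : PIAlg F n) : piMul x y = pairSum x y mulBasis :=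
  rfl

lemma actA_avgR (P : PartialIso F n) (Wp : Submodule F (Fin n → F)) :
    actA k l (avgR P Wp) = avgR (P.act k l) (Wp.comap (l : (Fin n → F) →ₗ[F] (Fin n → F))) := by
  rw [avgR_eq_uniformAvg, avgR_eq_uniformAvg]
  exact mapDomain_uniformAvg (actPerm k l) fun Q => by
    rw [actPerm_apply, isTrivialExt_act_iff, act_W, Submodule.comap_equiv_inj]

lemma actA_avgL (P : PartialIso F n) (Vp : Submodule F (Fin n → F)) :
    actA k l (avgL P Vp) = avgL (P.act k l) (Vp.comap (k : (Fin n → F) →ₗ[F] (Fin n → F))) := by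
  rw [avgL_eq_uniformAvg, avgL_eq_uniformAvg]
  exact mapDomain_uniformAvg (actPerm k l) fun Q => by
    rw [actPerm_apply, isTrivialExt_act_iff, act_V, Submodule.comap_equiv_inj]

lemma swapA_avgR (P : PartialIso F n) (Wp : Submodule F (Fin n → F)) :
    swapA (avgR P Wp) = avgL P.swap Wp := by
  rw [avgR_eq_uniformAvg, avgL_eq_uniformAvg]
  exact mapDomain_uniformAvg (swap_involutive.toPerm _) fun Q => by
    rw [Function.Involutive.coe_toPerm, isTrivialExt_swap_iff, swap_V]

lemma swapA_avgL (P : PartialIso F n) (Vp : Submodule F (Fin n → F)) :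
    swapA (avgL P Vp) = avgR P.swap Vp := by
  rw [avgR_eq_uniformAvg, avgL_eq_uniformAvg]
  exact mapDomain_uniformAvg (swap_involutive.toPerm _) fun Q => by
    rw [Function.Involutive.coe_toPerm, isTrivialExt_swap_iff, swap_W]

lemma actA_pairTerm (A B : PartialIso F n) :
    actA k l (pairTerm A B) = pairTerm (A.act k m) (B.act m l) := by
  have hmid : (A.act k m).W = (B.act m l).V ↔ A.W = B.V := Submodule.comap_equiv_inj m
  by_cases h : A.W = B.V
  · rw [pairTerm, pairTerm, dif_pos h, dif_pos (hmid.mpr h), actA, Finsupp.mapDomain_single,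
      act_compo k l m]
  · rw [pairTerm, pairTerm, dif_neg h, dif_neg (mt hmid.mp h), actA, Finsupp.mapDomain_zero]

lemma swapA_pairTerm (A B : PartialIso F n) :
    swapA (pairTerm A B) = pairTerm B.swap A.swap := by
  by_cases h : A.W = B.V
  · rw [pairTerm, pairTerm, dif_pos h, dif_pos (show B.swap.W = A.swap.V from h.symm), swapA,
      Finsupp.mapDomain_single, swap_compo]
  · rw [pairTerm, pairTerm, dif_neg h, dif_neg (show B.swap.W ≠ A.swap.V from Ne.symm h), swapA,
      Finsupp.mapDomain_zero]

lemma actA_mulBasis (P Q : PartialIso F n) :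
    actA k l (mulBasis P Q) = mulBasis (P.act k m) (Q.act m l) := by
  have hS : (P.act k m).W ⊔ (Q.act m l).V =
      (P.W ⊔ Q.V).comap (m : (Fin n → F) →ₗ[F] (Fin n → F)) := by
    simp only [act_W, act_V, Submodule.comap_equiv_eq_map_symm, Submodule.map_sup]
  rw [mulBasis_eq_pairSum, mulBasis_eq_pairSum, hS, ← actA_avgR k m, ← actA_avgL m l]
  exact mapDomain_pairSum (actA_pairTerm k l m) _ _

lemma swapA_mulBasis (P Q : PartialIso F n) :
    swapA (mulBasis P Q) = mulBasis Q.swap P.swap := by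
  rw [mulBasis_eq_pairSum, mulBasis_eq_pairSum, swap_W, swap_V, sup_comm, ← swapA_avgR,
    ← swapA_avgL, swapA, mapDomain_pairSum (f' := fun B A => pairTerm A B) swapA_pairTerm,
    pairSum_comm]
  rfl

lemma actA_piMul (x y : PIAlg F n) :
    actA k l (piMul x y) = piMul (actA k m x) (actA m l y) :=
  mapDomain_pairSum (actA_mulBasis k l m) x y

lemma swapA_piMul (x y : PIAlg F n) : swapA (piMul x y) = piMul (swapA y) (swapA x) := by
  rw [piMul_eq_pairSum, swapA, mapDomain_pairSum (f' := fun Q P => mulBasis P Q) swapA_mulBasis,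
    pairSum_comm]
  rfl

end Product

lemma apply_act_of_mem_Zset {x : PIAlg F n} (hx : x ∈ Zset F n)
    (k l : (Fin n → F) ≃ₗ[F] (Fin n → F)) (P : PartialIso F n) :
    x (P.act k l) = x P :=
  calc x (P.act k l) = actA k l x (P.act k l) := by rw [hx k l]
    _ = x P := Finsupp.mapDomain_apply (actPerm k l).injective x P

lemma swapA_eq_self_of_mem_Zset {x : PIAlg F n} (hx : x ∈ Zset F n) : swapA x = x := by
  ext P
  obtain ⟨k, l, hkl⟩ := P.exists_act_eq_swap
  calc swapA x P = swapA x P.swap.swap := rfl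
    _ = x P.swap := Finsupp.mapDomain_apply swap_involutive.injective x _
    _ = x P := by rw [← hkl, apply_act_of_mem_Zset hx]

theorem statement14_general {F : Type*} [Field F] {n : ℕ} :
    ∀ x ∈ Zset F n, ∀ y ∈ Zset F n, piMul x y ∈ Zset F n ∧ piMul x y = piMul y x := by
  intro x hx y hy
  have hxy : piMul x y ∈ Zset F n := fun k l => by
    rw [actA_piMul k l (LinearEquiv.refl F _), hx, hy]
  refine ⟨hxy, ?_⟩
  calc piMul x y = swapA (piMul x y) := (swapA_eq_self_of_mem_Zset hxy).symm
    _ = piMul (swapA y) (swapA x) := swapA_piMul x y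
    _ = piMul y x := by rw [swapA_eq_self_of_mem_Zset hx, swapA_eq_self_of_mem_Zset hy]

/-- The subspace `𝒵(n,F)` of `GL(n,F)`-biinvariant elements is closed under the product of
`𝒜(n,F)`, and it is commutative. -/
theorem statement14 {F : Type*} [Field F] [Fintype F] {n : ℕ} :
    ∀ x ∈ Zset F n, ∀ y ∈ Zset F n, piMul x y ∈ Zset F n ∧ piMul x y = piMul y x :=
  statement14_general
end

section
/- Let G be a finite group and let G^op denote its opposite group, so that the product in G × G^op is (g₁, g₂)(h₁, h₂) = (g₁h₁, h₂g₂). Define the ℂ-linear map Φ : ℂ[G] → ℂ[G × G^op] by Φ(g) = (1/|G|) Σ_{(g₁, g₂) ∈ G × G, g₁g₂ = g} (g₁, g₂). Then the restriction of Φ to the center Z(ℂ[G]) of the group algebra is an injective multiplicative map: Φ(x · y) = Φ(x) · Φ(y) for all x, y ∈ Z(ℂ[G]). In particular, if C_λ denotes the sum of the elements of a conjugacy class λ of G and C_λ · C_μ = Σ_ν a_{λμ}^ν C_ν in Z(ℂ[G]), then Φ(C_λ) · Φ(C_μ) = Σ_ν a_{λμ}^ν Φ(C_ν) in ℂ[G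 × G^op]. -/
/-!
The coefficient of `Φ(x)` at `(a, b)` is `|G|⁻¹ x(ab)`, which gives linearity and injectivity at
once. For the product, `(Φx Φy)(a, b) = |G|⁻² ∑_{c,t} x(t) y(c⁻¹ a b t⁻¹ c)` after writing the first
factor's index as `(c, c⁻¹ t)`. When `y` is central its coefficients satisfy `y(gh) = y(hg)`, so
the inner sum is `(xy)(ab)` for each of the `|G|` values of `c`.
-/

/-- The ℂ-linear map `Φ : ℂ[G] → ℂ[G × Gᵒᵖ]` with
`Φ(g) = (1/|G|) ∑_{g₁ g₂ = g} (g₁, g₂)`. -/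
noncomputable def Phi (G : Type*) [Group G] [Fintype G] (x : MonoidAlgebra ℂ G) :
    MonoidAlgebra ℂ (G × Gᵐᵒᵖ) :=
  Finsupp.sum x.coeff fun g c =>
    (Fintype.card G : ℂ)⁻¹ •
      ∑ g₁ : G, MonoidAlgebra.single (g₁, MulOpposite.op (g₁⁻¹ * g)) c

open MulOpposite MonoidAlgebra

instance MulOpposite.fintype {α : Type*} [Fintype α] : Fintype αᵐᵒᵖ :=
  Fintype.ofEquiv α opEquiv

namespace MonoidAlgebra

variable {R G : Type*} [Group G]

theorem coeff_mul_eq_sum [Semiring R] [Fintype G] (x y : MonoidAlgebra R G) (g : G) :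
    (x * y).coeff g = ∑ h : G, x.coeff h * y.coeff (h⁻¹ * g) := by
  rw [coeff_mul_apply_left, Finsupp.sum_fintype _ _ fun _ ↦ zero_mul _]

theorem coeff_mul_comm_of_mem_center [CommSemiring R] {y : MonoidAlgebra R G}
    (hy : y ∈ Subalgebra.center R (MonoidAlgebra R G)) (g h : G) :
    y.coeff (g * h) = y.coeff (h * g) := by
  have hcomm := congr_arg (coeff · (g * h * g)) (Subalgebra.mem_center_iff.mp hy (single g 1))
  simpa [mul_assoc] using hcomm.symm

end MonoidAlgebra

section Phi

variable {G : Type*} [Group G] [Fintype G]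

theorem coeff_Phi (x : MonoidAlgebra ℂ G) (p : G × Gᵐᵒᵖ) :
    (Phi G x).coeff p = (Fintype.card G : ℂ)⁻¹ * x.coeff (p.1 * p.2.unop) := by
  classical
  obtain ⟨a, b⟩ := p
  have hsupp (g g₁ : G) : (g₁, op (g₁⁻¹ * g)) = (a, b) ↔ g₁ = a ∧ g = a * b.unop := by
    simp only [Prod.mk.injEq, ← unop_inj, unop_op, inv_mul_eq_iff_eq_mul]
    exact and_congr_right fun h => by rw [h]
  have hsum (g : G) (c : ℂ) :
      (∑ g₁ : G, single (g₁, op (g₁⁻¹ * g)) c : MonoidAlgebra ℂ (G × Gᵐᵒᵖ)).coeff (a, b) =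
        if g = a * b.unop then c else 0 := by
    simp only [coeff_sum, Finset.sum_apply', coeff_single, Finsupp.single_apply, hsupp, ite_and,
      Finset.sum_ite_eq', Finset.mem_univ, if_true]
  simp only [Phi, coeff_finsuppSum, Finsupp.sum_apply, coeff_smul, Finsupp.smul_apply, hsum,
    smul_eq_mul]
  rw [Finsupp.sum]
  simp

theorem Phi_add (x y : MonoidAlgebra ℂ G) : Phi G (x + y) = Phi G x + Phi G y := by
  ext p
  simp only [coeff_add, Finsupp.add_apply, coeff_Phi, mul_add]

theorem Phi_smul (c : ℂ) (x : MonoidAlgebra ℂ G) : Phi G (c • x) = c • Phi G x := by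
  ext p
  simp only [coeff_smul, Finsupp.smul_apply, coeff_Phi, smul_eq_mul, mul_left_comm]

theorem Phi_injective : Function.Injective (Phi G) := by
  intro x y hxy
  ext g
  have hcoeff := congr_arg (coeff · (g, op 1)) hxy
  simpa [coeff_Phi] using hcoeff

theorem Phi_mul_of_mem_center (x : MonoidAlgebra ℂ G) {y : MonoidAlgebra ℂ G}
    (hy : y ∈ Subalgebra.center ℂ (MonoidAlgebra ℂ G)) : Phi G (x * y) = Phi G x * Phi G y := by
  ext ⟨a, b⟩
  set N := (Fintype.card G : ℂ)⁻¹
  have hterm (c t : G) :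
      (Phi G x).coeff (c, op (c⁻¹ * t)) * (Phi G y).coeff ((c, op (c⁻¹ * t))⁻¹ * (a, b)) =
        N * N * (x.coeff t * y.coeff (t⁻¹ * (a * b.unop))) := by
    have hconj : y.coeff (c⁻¹ * a * (b.unop * (c⁻¹ * t)⁻¹)) = y.coeff (t⁻¹ * (a * b.unop)) :=
      calc _ = y.coeff (c⁻¹ * (a * b.unop * t⁻¹ * c)) := by group
        _ = y.coeff (a * b.unop * t⁻¹ * c * c⁻¹) := coeff_mul_comm_of_mem_center hy _ _
        _ = y.coeff (a * b.unop * t⁻¹) := by group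
        _ = y.coeff (t⁻¹ * (a * b.unop)) := coeff_mul_comm_of_mem_center hy _ _
    simp only [N, coeff_Phi, Prod.fst_mul, Prod.snd_mul, Prod.fst_inv, Prod.snd_inv, unop_mul,
      unop_inv, unop_op, mul_inv_cancel_left, hconj]
    ring
  calc (Phi G (x * y)).coeff (a, b) = N * (x * y).coeff (a * b.unop) := coeff_Phi _ _
    _ = ∑ c : G, ∑ t : G,
          (Phi G x).coeff (c, op (c⁻¹ * t)) * (Phi G y).coeff ((c, op (c⁻¹ * t))⁻¹ * (a, b)) := by
      simp only [hterm, ← Finset.mul_sum, ← coeff_mul_eq_sum, Finset.sum_const, Finset.card_univ,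
        nsmul_eq_mul]
      have hcard : (Fintype.card G : ℂ) ≠ 0 := by exact_mod_cast Fintype.card_ne_zero
      simp only [N]
      field_simp
    _ = (Phi G x * Phi G y).coeff (a, b) := by
      rw [coeff_mul_eq_sum, Fintype.sum_prod_type]
      refine Fintype.sum_congr _ _ fun c => ?_
      exact Fintype.sum_equiv ((Equiv.mulLeft c⁻¹).trans opEquiv) _ _ fun _ => rfl

end Phi

/-- `Φ` is ℂ-linear, and its restriction to the center of `ℂ[G]` is injective and
multiplicative. -/
theorem statement17 (G : Type*) [Group G] [Fintype G] :
    (∀ x y : MonoidAlgebra ℂ G, Phi G (x + y) = Phi G x + Phi G y) ∧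
    (∀ (c : ℂ) (x : MonoidAlgebra ℂ G), Phi G (c • x) = c • Phi G x) ∧
    (∀ x ∈ Subalgebra.center ℂ (MonoidAlgebra ℂ G),
      ∀ y ∈ Subalgebra.center ℂ (MonoidAlgebra ℂ G),
        Phi G (x * y) = Phi G x * Phi G y) ∧
    Set.InjOn (Phi G)
      (Subalgebra.center ℂ (MonoidAlgebra ℂ G) : Set (MonoidAlgebra ℂ G)) :=
  ⟨Phi_add, Phi_smul, fun x _ _ hy => Phi_mul_of_mem_center x hy, Phi_injective.injOn⟩
end

section
/- Let F be a finite field of characteristic 2 with q elements, and let b ∈ F with b ≠ 0. Then the number of elements a ∈ F such that the polynomial X² + aX + b is irreducible over F equals q/2. -/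
open Polynomial

/-- Over a finite field of characteristic 2 with `q` elements, for `b ≠ 0`, the number of
`a` such that `X² + aX + b` is irreducible is `q/2`. -/
theorem statement19 {F : Type*} [Field F] [Fintype F] [CharP F 2] (b : F) (hb : b ≠ 0) :
    Nat.card {a : F // Irreducible (X ^ 2 + C a * X + C b)} = Fintype.card F / 2 := by
  classical
  have h2 : (2 : F) = 0 := by exact_mod_cast CharP.cast_eq_zero F 2
  -- square root of b
  obtain ⟨s, hs⟩ : ∃ s : F, s ^ 2 = b := by
    obtain ⟨s, hs⟩ := (frobeniusEquiv F 2).surjective b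
    exact ⟨s, by rwa [frobeniusEquiv_apply, frobenius_def] at hs⟩
  have hs0 : s ≠ 0 := by
    intro h; apply hb; rw [← hs, h]; ring
  have hsqinj : ∀ x y : F, x ^ 2 = y ^ 2 → x = y := by
    intro x y h
    exact frobenius_inj F 2 (by rwa [frobenius_def, frobenius_def])
  set e : F → F := fun x => x + b * x⁻¹ with he_def
  have he0 : e 0 = 0 := by simp [he_def]
  have hes : e s = 0 := by
    simp only [he_def]
    field_simp
    linear_combination hs + b * h2
  -- roots correspondence
  have hroot : ∀ a x : F, x ^ 2 + a * x + b = 0 ↔ (x ≠ 0 ∧ e x = a) := by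
    intro a x
    constructor
    · intro hx
      have hx0 : x ≠ 0 := by
        intro h; apply hb; rw [h] at hx; linear_combination hx
      refine ⟨hx0, ?_⟩
      have : x * e x = x * a := by
        simp only [he_def]
        field_simp
        linear_combination hx - x * a * h2
      exact mul_left_cancel₀ hx0 this
    · rintro ⟨hx0, rfl⟩
      simp only [he_def]
      field_simp
      linear_combination (x ^ 2 + b) * h2
  -- irreducibility criterion
  have key : ∀ a : F, Irreducible (X ^ 2 + C a * X + C b) ↔ ∀ x : F, e x ≠ a := by
    intro a
    have hdeg : (X ^ 2 + C a * X + C b : F[X]).natDegree = 2 := by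
      compute_degree!
    have hp0 : (X ^ 2 + C a * X + C b : F[X]) ≠ 0 := by
      intro h; rw [h] at hdeg; simp at hdeg
    have hmem : ∀ x : F, x ∈ (X ^ 2 + C a * X + C b : F[X]).roots ↔
        x ^ 2 + a * x + b = 0 := by
      intro x
      rw [mem_roots hp0]
      simp [IsRoot]
    rw [irreducible_iff_roots_eq_zero_of_degree_le_three (by omega) (by omega),
      Multiset.eq_zero_iff_forall_notMem]
    constructor
    · intro h x hx
      rcases eq_or_ne x 0 with rfl | hx0
      · rw [he0] at hx
        subst hx
        exact h s ((hmem s).mpr ((hroot 0 s).mpr ⟨hs0, hes⟩))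
      · exact h x ((hmem x).mpr ((hroot a x).mpr ⟨hx0, hx⟩))
    · intro h x hx
      exact h x ((hroot a x).mp ((hmem x).mp hx)).2
  -- counting the image of e
  set img : Finset F := Finset.univ.image e with himg_def
  have hfib : ∀ a ∈ img, (Finset.univ.filter (fun x => e x = a)).card = 2 := by
    intro a ha
    obtain ⟨x, -, hx⟩ := Finset.mem_image.mp ha
    rcases eq_or_ne a 0 with rfl | ha0
    · have hset : (Finset.univ.filter (fun x => e x = 0)) = {0, s} := by
        ext y
        simp only [Finset.mem_filter, Finset.mem_univ, true_and, Finset.mem_insert,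
          Finset.mem_singleton]
        constructor
        · intro hy
          rcases eq_or_ne y 0 with rfl | hy0
          · exact Or.inl rfl
          · refine Or.inr (hsqinj y s ?_)
            simp only [he_def] at hy
            field_simp at hy
            linear_combination hy + hs - s ^ 2 * h2
        · rintro (rfl | rfl)
          · exact he0
          · exact hes
      rw [hset, Finset.card_pair (Ne.symm hs0)]
    · have hx0 : x ≠ 0 := by
        rintro rfl; rw [he0] at hx; exact ha0 hx.symm
      have ht0 : b * x⁻¹ ≠ 0 := by
        exact mul_ne_zero hb (inv_ne_zero hx0)
      have htx : x ≠ b * x⁻¹ := by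
        intro h
        apply ha0
        rw [← hx]
        simp only [he_def]
        rw [← h]
        linear_combination x * h2
      have hset : (Finset.univ.filter (fun y => e y = a)) = {x, b * x⁻¹} := by
        ext y
        simp only [Finset.mem_filter, Finset.mem_univ, true_and, Finset.mem_insert,
          Finset.mem_singleton]
        constructor
        · intro hy
          have hy0 : y ≠ 0 := by
            rintro rfl; rw [he0] at hy; exact ha0 hy.symm
          have heq : e y = e x := by rw [hy, hx]
          simp only [he_def] at heq
          have h' : (y - x) * (x * y - b) = 0 := by
            field_simp at heq
            linear_combination heq
          rcases mul_eq_zero.mp h' with h | h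
          · exact Or.inl (sub_eq_zero.mp h)
          · refine Or.inr ?_
            have := sub_eq_zero.mp h
            field_simp
            linear_combination this
        · rintro (rfl | rfl)
          · exact hx
          · rw [← hx]
            simp only [he_def]
            field_simp
            ring
      rw [hset, Finset.card_pair htx]
  have hsum : Fintype.card F = 2 * img.card := by
    rw [← Finset.card_univ, Finset.card_eq_sum_card_image e Finset.univ, ← himg_def,
      Finset.sum_congr rfl hfib, Finset.sum_const, smul_eq_mul, mul_comm]
  have hcount : Nat.card {a : F // Irreducible (X ^ 2 + C a * X + C b)} =
      Fintype.card F - img.card := by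
    rw [Nat.card_congr (Equiv.subtypeEquivRight key), Nat.card_eq_fintype_card,
      Fintype.card_subtype]
    have : (Finset.univ.filter (fun a : F => ∀ x : F, e x ≠ a)) = imgᶜ := by
      ext a
      simp [himg_def, eq_comm]
    rw [this, Finset.card_compl]
  rw [hcount]
  omega
end
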